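/- Let C₁ > 0 and C₂ > 0, and define ξ_p, ψ, r as in the JKD setting. Then the total mass of the representing measure dλ^D = ψ(u)du + r·δ_{ξ_p} equals C₂; that is, ∫₀^{C₁} ψ(u) du + r = C₂. -/

import Mathlib

/-- The pole location ξ_p of the JKD function R^D. -/
noncomputable def xip (C₁ C₂ : ℝ) : ℝ := (C₁ + Real.sqrt (C₁ ^ 2 + 4 * C₂ ^ 2)) / 2

/-- The density ψ of the absolutely continuous part of the JKD representing measure. -/
noncomputable def psi (C₁ C₂ u : ℝ) : ℝ :=
  C₂ * Real.sqrt (u * (C₁ - u)) / (Real.pi * (C₂ ^ 2 + u * (C₁ - u)))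

/-- The strength r of the Dirac mass at ξ_p. -/
noncomputable def rres (C₁ C₂ : ℝ) : ℝ :=
  2 * C₂ * Real.sqrt (xip C₁ C₂ * (xip C₁ C₂ - C₁)) / (2 * xip C₁ C₂ - C₁)

/-!
Write `q = u (C₁ - u)` and `S = √(C₁² + 4 C₂²)`. Since `(2u - C₁)² + 4q = C₁²`, for `a ≥ 0` the
function `arcsin ((2u - C₁) / √(C₁² + a q))` has derivative `√(a + 4) C₁² / (2 √q (C₁² + a q))` on
`(0, C₁)` and runs continuously from `-π/2` to `π/2` on `[0, C₁]`. Splitting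
`ψ = (C₂/π) (1/√q - C₂² / (√q (C₂² + q)))`, the two summands are such derivatives for `a = 0` and
`a = C₁²/C₂²`, so `∫ψ = C₂ - 2C₂²/S`. On the other hand `ξ_p (ξ_p - C₁) = C₂²` and `2ξ_p - C₁ = S`,
so `r = 2C₂²/S`.
-/

open Real Set

noncomputable def arcsinChord (c a u : ℝ) : ℝ :=
  arcsin ((2 * u - c) / √(c ^ 2 + a * (u * (c - u))))

section ArcsinChord

variable {c a : ℝ}

lemma arcsinChord_zero (hc : 0 < c) : arcsinChord c a 0 = -(π / 2) := by
  simp [arcsinChord, sqrt_sq hc.le, hc.ne']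

lemma arcsinChord_self (hc : 0 < c) : arcsinChord c a c = π / 2 := by
  simp [arcsinChord, two_mul, sqrt_sq hc.le, hc.ne']

lemma continuousOn_arcsinChord (hc : 0 < c) (ha : 0 ≤ a) :
    ContinuousOn (arcsinChord c a) (Icc 0 c) := by
  refine continuous_arcsin.comp_continuousOn (ContinuousOn.div (by fun_prop) (by fun_prop) ?_)
  rintro u ⟨hu₀, huc⟩
  have : 0 ≤ a * (u * (c - u)) := mul_nonneg ha (mul_nonneg hu₀ (by linarith))
  positivity

lemma hasDerivAt_arcsinChord (ha : 0 ≤ a) {u : ℝ} (hu : u ∈ Ioo 0 c) :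
    HasDerivAt (arcsinChord c a)
      (√(a + 4) * c ^ 2 / (2 * √(u * (c - u)) * (c ^ 2 + a * (u * (c - u))))) u := by
  obtain ⟨hu₀, huc⟩ := hu
  set q := u * (c - u)
  set D := c ^ 2 + a * q
  have hq : 0 < q := mul_pos hu₀ (by linarith)
  have hD : 0 < D := add_pos_of_pos_of_nonneg (by nlinarith) (mul_nonneg ha hq.le)
  have hchord : (2 * u - c) ^ 2 + 4 * q = c ^ 2 := by ring
  have hDsq : √D ^ 2 = D := sq_sqrt hD.le
  have hq' : HasDerivAt (fun x => x * (c - x)) (c - 2 * u) u :=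
    ((hasDerivAt_id' u).mul ((hasDerivAt_id' u).const_sub c)).congr_deriv (by ring)
  have hv : HasDerivAt (fun x => (2 * x - c) / √(c ^ 2 + a * (x * (c - x))))
      ((2 * √D - (2 * u - c) * (a * (c - 2 * u) / (2 * √D))) / √D ^ 2) u :=
    (((hasDerivAt_id' u).const_mul 2).sub_const c).div
      (((hq'.const_mul a).const_add (c ^ 2)).sqrt hD.ne') (sqrt_pos.2 hD).ne' |>.congr_deriv
      (by ring)
  have hgap : 1 - ((2 * u - c) / √D) ^ 2 = (a + 4) * q / D := by
    field_simp; rw [hDsq]; linear_combination -hchord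
  have hlt : ((2 * u - c) / √D) ^ 2 < 1 := by
    have : 0 < (a + 4) * q / D := by positivity
    linarith
  have hne : (2 * u - c) / √D ≠ -1 ∧ (2 * u - c) / √D ≠ 1 := by
    constructor <;> intro h <;> rw [h] at hlt <;> norm_num at hlt
  refine ((hasDerivAt_arcsin hne.1 hne.2).comp u hv).congr_deriv ?_
  rw [hgap, sqrt_div (by positivity), sqrt_mul (by positivity)]
  have : 0 < √(a + 4) := sqrt_pos.2 (by linarith)
  have : 0 < √q := sqrt_pos.2 hq
  have : 0 < √D := sqrt_pos.2 hD
  field_simp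
  rw [hDsq, sq_sqrt (by linarith)]
  linear_combination hchord

end ArcsinChord

section JKD

variable {C₁ C₂ : ℝ}

lemma two_mul_xip_sub : 2 * xip C₁ C₂ - C₁ = √(C₁ ^ 2 + 4 * C₂ ^ 2) := by
  rw [xip]; ring

lemma xip_mul_xip_sub : xip C₁ C₂ * (xip C₁ C₂ - C₁) = C₂ ^ 2 := by
  rw [xip]
  linear_combination (sq_sqrt (by positivity : (0:ℝ) ≤ C₁ ^ 2 + 4 * C₂ ^ 2)) / 4

lemma rres_eq (hC₂ : 0 ≤ C₂) : rres C₁ C₂ = 2 * C₂ ^ 2 / √(C₁ ^ 2 + 4 * C₂ ^ 2) := by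
  rw [rres, xip_mul_xip_sub, two_mul_xip_sub, sqrt_sq hC₂]
  ring

noncomputable def psiPrimitive (C₁ C₂ u : ℝ) : ℝ :=
  C₂ / π * arcsinChord C₁ 0 u
    - 2 * C₂ ^ 2 / (π * √(C₁ ^ 2 + 4 * C₂ ^ 2)) * arcsinChord C₁ (C₁ ^ 2 / C₂ ^ 2) u

lemma hasDerivAt_psiPrimitive (hC₂ : 0 < C₂) {u : ℝ} (hu : u ∈ Ioo 0 C₁) :
    HasDerivAt (psiPrimitive C₁ C₂) (psi C₁ C₂ u) u := by
  have hC₁ : 0 < C₁ := hu.1.trans hu.2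
  have hq : 0 < u * (C₁ - u) := mul_pos hu.1 (by linarith [hu.2])
  have hS : √(C₁ ^ 2 / C₂ ^ 2 + 4) = √(C₁ ^ 2 + 4 * C₂ ^ 2) / C₂ := by
    rw [show C₁ ^ 2 / C₂ ^ 2 + 4 = (C₁ ^ 2 + 4 * C₂ ^ 2) / C₂ ^ 2 by field_simp,
      sqrt_div' _ (sq_nonneg C₂), sqrt_sq hC₂.le]
  refine (((hasDerivAt_arcsinChord le_rfl hu).const_mul _).sub
    ((hasDerivAt_arcsinChord (by positivity) hu).const_mul _)).congr_deriv ?_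
  rw [hS, psi, show (0:ℝ) + 4 = 2 ^ 2 by norm_num, sqrt_sq zero_le_two]
  have hsq := sq_sqrt hq.le
  have : 0 < √(u * (C₁ - u)) := sqrt_pos.2 hq
  have : 0 < √(C₁ ^ 2 + 4 * C₂ ^ 2) := sqrt_pos.2 (by positivity)
  field_simp
  linear_combination (-C₁ ^ 2) * hsq

lemma continuousOn_psi (hC₂ : C₂ ≠ 0) : ContinuousOn (psi C₁ C₂) (Icc 0 C₁) := by
  refine ContinuousOn.div (by fun_prop) (by fun_prop) ?_
  rintro u ⟨hu₀, hu₁⟩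
  have : 0 ≤ u * (C₁ - u) := mul_nonneg hu₀ (by linarith)
  positivity

lemma integral_psi (hC₁ : 0 < C₁) (hC₂ : 0 < C₂) :
    ∫ u in (0:ℝ)..C₁, psi C₁ C₂ u = C₂ - 2 * C₂ ^ 2 / √(C₁ ^ 2 + 4 * C₂ ^ 2) := by
  have hcont : ContinuousOn (psiPrimitive C₁ C₂) (Icc 0 C₁) :=
    ((continuousOn_arcsinChord hC₁ le_rfl).const_mul _).sub
      ((continuousOn_arcsinChord hC₁ (by positivity)).const_mul _)
  rw [intervalIntegral.integral_eq_sub_of_hasDerivAt_of_le hC₁.le hcont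
    (fun _ hu ↦ hasDerivAt_psiPrimitive hC₂ hu)
    ((continuousOn_psi hC₂.ne').intervalIntegrable_of_Icc hC₁.le)]
  simp only [psiPrimitive, arcsinChord_zero hC₁, arcsinChord_self hC₁]
  field_simp
  ring

end JKD

/-- The total mass of the representing measure dλ^D = ψ du + r δ_{ξ_p} equals C₂. -/
theorem stmt5 (C₁ C₂ : ℝ) (hC₁ : 0 < C₁) (hC₂ : 0 < C₂) :
    (∫ u in (0:ℝ)..C₁, psi C₁ C₂ u) + rres C₁ C₂ = C₂ := by
  rw [integral_psi hC₁ hC₂, rres_eq hC₂.le]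
  ring
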